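/- arXiv:2012.11276 — 3 statements merged into one kernel-verified Lean document; each statement's English description precedes it below -/
import Mathlib

section
/- There exists a constant C > 0 such that for every integer k ≥ 1 and every nonzero real polynomial p of degree at most k, there exists a real polynomial q of degree at most k+2 with q(0) = q(1) = 0 and ∫₀¹ q'(x)² dx > 0 satisfying ∫₀¹ p(x) q(x) dx ≥ C k⁻² (∫₀¹ p(x)² dx)^{1/2} (∫₀¹ q'(x)² dx)^{1/2}. (This is the constructive core of the inverse inequality ‖p‖_{L²(I)} ≲ k² ‖p‖_{(H¹₀(I))'} on the unit interval.) -/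
/-
Take `q` with `q'' = -p` and `q(0) = q(1) = 0`; integrating by parts, `∫ p q = ∫ q'²`, so the
claim reduces to the L² Markov inequality `‖r'‖ ≤ 2 m² ‖r‖` for `r = q'` of degree `< m = k + 2`.
For that, expand `r = ∑ aₙ Lₙ` in the shifted Legendre polynomials, which are orthogonal with
`‖Lₙ‖² = 1 / (2n + 1)`, `Lₙ(0) = 1` and `Lₙ(1) = (-1)ⁿ`. Integration by parts gives
`|∫ Lₙ' Lⱼ| ≤ 2`, so every Legendre coefficient of `r'` is controlled by `∑ |aₙ|`, and
Cauchy–Schwarz together with `∑_{n<m} (2n + 1) = m²` yields the factor `m⁴` in `‖r'‖²`.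
-/

open MeasureTheory Finset Polynomial

namespace Polynomial

noncomputable def unitIntegral : ℝ[X] →ₗ[ℝ] ℝ where
  toFun f := ∫ x in (0:ℝ)..1, f.eval x
  map_add' f g := by
    simp only [eval_add]
    exact intervalIntegral.integral_add (f.continuous.intervalIntegrable _ _)
      (g.continuous.intervalIntegrable _ _)
  map_smul' c f := by simp [intervalIntegral.integral_const_mul]

theorem unitIntegral_apply (f : ℝ[X]) : unitIntegral f = ∫ x in (0:ℝ)..1, f.eval x := rfl

theorem unitIntegral_eq_setIntegral_Ioo (f : ℝ[X]) :
    unitIntegral f = ∫ x in Set.Ioo (0:ℝ) 1, f.eval x := by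
  rw [unitIntegral_apply, intervalIntegral.integral_of_le zero_le_one,
    integral_Ioc_eq_integral_Ioo]

theorem unitIntegral_derivative (f : ℝ[X]) :
    unitIntegral (derivative f) = f.eval 1 - f.eval 0 :=
  intervalIntegral.integral_eq_sub_of_hasDerivAt (fun x _ => f.hasDerivAt x)
    ((derivative f).continuous.intervalIntegrable _ _)

theorem unitIntegral_derivative_mul (f g : ℝ[X]) :
    unitIntegral (derivative f * g) =
      f.eval 1 * g.eval 1 - f.eval 0 * g.eval 0 - unitIntegral (f * derivative g) := by
  have h := unitIntegral_derivative (f * g)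
  rw [derivative_mul, map_add, eval_mul, eval_mul] at h
  linarith

theorem unitIntegral_sq_pos {f : ℝ[X]} (hf : f ≠ 0) : 0 < unitIntegral (f ^ 2) := by
  have ⟨c, hc, hfc⟩ : ∃ c ∈ Set.Icc (0:ℝ) 1, f.eval c ≠ 0 := by
    by_contra! h
    exact hf (f.eq_zero_of_infinite_isRoot ((Set.Icc_infinite zero_lt_one).mono h))
  refine intervalIntegral.integral_pos zero_lt_one (f ^ 2).continuous.continuousOn
    (fun x _ => by simpa using sq_nonneg (f.eval x)) ⟨c, hc, ?_⟩
  simpa using pow_pos (abs_pos.mpr hfc) 2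

theorem unitIntegral_iterate_derivative_mul {u : ℝ[X]} {n : ℕ}
    (hu : ∀ j < n, (derivative^[j] u).eval 0 = 0 ∧ (derivative^[j] u).eval 1 = 0) (g : ℝ[X]) :
    unitIntegral (derivative^[n] u * g) = (-1) ^ n * unitIntegral (u * derivative^[n] g) := by
  induction n generalizing g with
  | zero => simp
  | succ n ih =>
    obtain ⟨h0, h1⟩ := hu n n.lt_succ_self
    rw [Function.iterate_succ_apply', unitIntegral_derivative_mul, h0, h1,
      ih (fun j hj => hu j (hj.trans n.lt_succ_self)), ← Function.iterate_succ_apply]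
    ring

theorem exists_derivative_eq {K : Type*} [Field K] [CharZero K] (p : K[X]) :
    ∃ P : K[X], derivative P = p ∧ P.natDegree ≤ p.natDegree + 1 := by
  refine ⟨∑ i ∈ range (p.natDegree + 1), C (p.coeff i / (i + 1)) * X ^ (i + 1), ?_, ?_⟩
  · conv_rhs => rw [p.as_sum_range_C_mul_X_pow]
    rw [derivative_sum]
    refine sum_congr rfl fun i _ => ?_
    rw [derivative_C_mul_X_pow, Nat.add_sub_cancel]
    congr 2
    push_cast
    field_simp
  · exact natDegree_sum_le_of_forall_le _ _ fun i hi =>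
      (natDegree_C_mul_X_pow_le _ _).trans (by simp at hi; omega)

theorem exists_derivative_derivative_eq_vanishing_at_zero_one {K : Type*} [Field K] [CharZero K]
    (f : K[X]) :
    ∃ q : K[X], derivative (derivative q) = f ∧ q.eval 0 = 0 ∧ q.eval 1 = 0 ∧
      q.natDegree ≤ f.natDegree + 2 := by
  obtain ⟨P₁, hP₁, hdeg₁⟩ := exists_derivative_eq f
  obtain ⟨P₂, hP₂, hdeg₂⟩ := exists_derivative_eq P₁
  refine ⟨P₂ - C (P₂.eval 0) - C (P₂.eval 1 - P₂.eval 0) * X, ?_, by simp, by simp, ?_⟩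
  · simp [hP₂, hP₁]
  · refine (natDegree_sub_le _ _).trans (max_le ((natDegree_sub_le _ _).trans (max_le ?_ ?_)) ?_)
    · omega
    · simp
    · exact (natDegree_C_mul_le _ _).trans (natDegree_X_le.trans (by omega))

noncomputable def realShiftedLegendre (n : ℕ) : ℝ[X] := (shiftedLegendre n).map (algebraMap ℤ ℝ)

local notation "L" => realShiftedLegendre

theorem degree_realShiftedLegendre (n : ℕ) : (L n).degree = n := by
  rw [realShiftedLegendre, degree_map_eq_of_injective (RingHom.injective_int _),
    degree_shiftedLegendre]

theorem realShiftedLegendre_eval_zero (n : ℕ) : (L n).eval 0 = 1 := by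
  simp [← coeff_zero_eq_eval_zero, realShiftedLegendre, coeff_shiftedLegendre]

theorem realShiftedLegendre_eval_one (n : ℕ) : (L n).eval 1 = (-1) ^ n := by
  rw [realShiftedLegendre, eval_map_algebraMap, shiftedLegendre_eval_symm, sub_self,
    ← eval_map_algebraMap, ← realShiftedLegendre, realShiftedLegendre_eval_zero, mul_one]

theorem factorial_mul_realShiftedLegendre (n : ℕ) :
    (n.factorial : ℝ[X]) * L n = derivative^[n] ((X * (1 - X)) ^ n) := by
  have h := congrArg (map (algebraMap ℤ ℝ)) (factorial_mul_shiftedLegendre_eq n)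
  rwa [Polynomial.map_mul, Polynomial.map_natCast, ← iterate_derivative_map, Polynomial.map_mul,
    Polynomial.map_pow, Polynomial.map_pow, Polynomial.map_sub, map_X, Polynomial.map_one,
    ← mul_pow] at h

theorem unitIntegral_realShiftedLegendre_mul_eq_zero {n : ℕ} {s : ℝ[X]} (hs : s.degree < n) :
    unitIntegral (L n * s) = 0 := by
  have hvanish : ∀ j < n, ∀ x ∈ ({0, 1} : Set ℝ),
      (derivative^[j] ((X * (1 - X)) ^ n)).eval x = 0 := by
    intro j hj x hx
    obtain ⟨t, ht⟩ := pow_sub_dvd_iterate_derivative_pow (X * (1 - X) : ℝ[X]) n j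
    rcases hx with rfl | rfl <;> simp [ht, Nat.sub_ne_zero_of_lt hj]
  have h := unitIntegral_iterate_derivative_mul
    (fun j hj => ⟨hvanish j hj 0 (by simp), hvanish j hj 1 (by simp)⟩) s
  rw [← factorial_mul_realShiftedLegendre, iterate_derivative_eq_zero_of_degree_lt hs, mul_zero,
    map_zero, mul_zero, mul_assoc, ← nsmul_eq_mul, map_nsmul, nsmul_eq_mul] at h
  exact (mul_eq_zero.mp h).resolve_left (by positivity)

theorem unitIntegral_realShiftedLegendre_mul_realShiftedLegendre {i j : ℕ} (hij : i ≠ j) :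
    unitIntegral (L i * L j) = 0 := by
  rcases hij.lt_or_gt with h | h
  · rw [mul_comm]
    exact unitIntegral_realShiftedLegendre_mul_eq_zero
      (by rw [degree_realShiftedLegendre]; exact_mod_cast h)
  · exact unitIntegral_realShiftedLegendre_mul_eq_zero
      (by rw [degree_realShiftedLegendre]; exact_mod_cast h)

theorem degree_X_mul_derivative_sub_lt {R : Type*} [CommRing R] {f : R[X]} {n : ℕ}
    (hf : f.natDegree ≤ n) : (X * derivative f - C (n : R) * f).degree < (n : WithBot ℕ) := by
  rw [degree_lt_iff_coeff_zero]
  intro m hm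
  rcases m with _ | m
  · obtain rfl : n = 0 := by omega
    simp
  · rw [coeff_sub, coeff_X_mul, coeff_derivative, coeff_C_mul]
    rcases (show n ≤ m + 1 by omega).eq_or_lt with rfl | hlt
    · push_cast; ring
    · simp [coeff_eq_zero_of_natDegree_lt (hf.trans_lt hlt)]

theorem unitIntegral_realShiftedLegendre_sq (n : ℕ) :
    unitIntegral (L n ^ 2) = 1 / (2 * n + 1) := by
  -- `X Lₙ' - n Lₙ` has degree `< n`, so integrating `(X Lₙ²)'` gives `1 = Lₙ(1)² = (2n + 1) ‖Lₙ‖²`.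
  have hnat : (L n).natDegree ≤ n := natDegree_le_of_degree_le (degree_realShiftedLegendre n).le
  have horth := unitIntegral_realShiftedLegendre_mul_eq_zero (degree_X_mul_derivative_sub_lt hnat)
  have hend := unitIntegral_derivative (X * L n ^ 2)
  have hsplit : derivative (X * L n ^ 2) =
      (2 * n + 1 : ℝ) • L n ^ 2 + (2 : ℝ) • (L n * (X * derivative (L n) - C (n : ℝ) * L n)) := by
    simp only [smul_eq_C_mul, derivative_mul, derivative_X, derivative_sq, map_add, map_mul,
      map_natCast, map_one, map_ofNat]
    ring
  have hboundary : (X * L n ^ 2).eval 1 - (X * L n ^ 2).eval 0 = 1 := by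
    simp [realShiftedLegendre_eval_one, ← pow_mul]
  rw [hsplit, map_add, map_smul, map_smul, horth, smul_zero, add_zero, smul_eq_mul,
    hboundary] at hend
  rw [eq_div_iff (by positivity)]
  linarith

noncomputable def realShiftedLegendreSequence : Sequence ℝ :=
  ⟨realShiftedLegendre, degree_realShiftedLegendre⟩

theorem exists_sum_smul_realShiftedLegendre_eq {f : ℝ[X]} {m : ℕ} (hf : f.degree < m) :
    ∃ c : ℕ → ℝ, ∑ i ∈ range m, c i • L i = f := by
  rwa [← mem_degreeLT, ← Sequence.span_degreeLT realShiftedLegendreSequence (by simp),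
    show Set.Iio m = range m by simp, Submodule.mem_span_image_finset_iff_exists_fun'] at hf

theorem unitIntegral_sum_smul_realShiftedLegendre_mul (c : ℕ → ℝ) {m j : ℕ} (hj : j < m) :
    unitIntegral ((∑ i ∈ range m, c i • L i) * L j) = c j / (2 * j + 1) := by
  rw [sum_mul, map_sum, sum_eq_single_of_mem j (mem_range.mpr hj)]
  · rw [smul_mul_assoc, map_smul, ← sq, unitIntegral_realShiftedLegendre_sq, smul_eq_mul,
      mul_one_div]
  · intro i _ hij
    rw [smul_mul_assoc, map_smul, unitIntegral_realShiftedLegendre_mul_realShiftedLegendre hij,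
      smul_zero]

theorem eq_sum_realShiftedLegendre {f : ℝ[X]} {m : ℕ} (hf : f.degree < m) :
    f = ∑ n ∈ range m, ((2 * n + 1) * unitIntegral (f * L n)) • L n := by
  obtain ⟨c, rfl⟩ := exists_sum_smul_realShiftedLegendre_eq hf
  refine sum_congr rfl fun n hn => ?_
  rw [unitIntegral_sum_smul_realShiftedLegendre_mul c (mem_range.mp hn)]
  field_simp

theorem unitIntegral_sq_eq_sum {f : ℝ[X]} {m : ℕ} (hf : f.degree < m) :
    unitIntegral (f ^ 2) = ∑ n ∈ range m, (2 * n + 1) * unitIntegral (f * L n) ^ 2 := by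
  conv_lhs => rw [sq]; arg 2; arg 2; rw [eq_sum_realShiftedLegendre hf]
  simp only [mul_sum, map_sum, mul_smul_comm, map_smul, smul_eq_mul]
  exact sum_congr rfl fun n _ => by ring

theorem abs_unitIntegral_derivative_realShiftedLegendre_mul_le (n j : ℕ) :
    |unitIntegral (derivative (L n) * L j)| ≤ 2 := by
  have hdeg : ∀ i, (derivative (L i)).degree < i := fun i =>
    (degree_derivative_lt (by simp [← degree_eq_bot, degree_realShiftedLegendre])).trans_eq
      (degree_realShiftedLegendre i)
  rcases lt_or_ge j n with h | h
  · rw [unitIntegral_derivative_mul,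
      unitIntegral_realShiftedLegendre_mul_eq_zero ((hdeg j).trans (by exact_mod_cast h))]
    simp only [realShiftedLegendre_eval_zero, realShiftedLegendre_eval_one, sub_zero, mul_one]
    calc |(-1) ^ n * (-1) ^ j - 1| ≤ |((-1 : ℝ) ^ n * (-1) ^ j)| + |1| := abs_sub _ _
      _ = 2 := by norm_num
  · rw [mul_comm, unitIntegral_realShiftedLegendre_mul_eq_zero
      ((hdeg n).trans_le (by exact_mod_cast h)), abs_zero]
    norm_num

theorem sum_range_two_mul_add_one (m : ℕ) : ∑ n ∈ range m, (2 * (n : ℝ) + 1) = m ^ 2 := by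
  induction m with
  | zero => simp
  | succ m ih => rw [sum_range_succ, ih]; push_cast; ring

theorem unitIntegral_derivative_sq_le {r : ℝ[X]} {m : ℕ} (hr : r.degree < m) :
    unitIntegral (derivative r ^ 2) ≤ 4 * m ^ 4 * unitIntegral (r ^ 2) := by
  set a : ℕ → ℝ := fun n => (2 * n + 1) * unitIntegral (r * L n)
  set S := ∑ n ∈ range m, |a n|
  have hcoeff (j : ℕ) : |unitIntegral (derivative r * L j)| ≤ 2 * S := by
    have hexp : unitIntegral (derivative r * L j) =
        ∑ n ∈ range m, a n * unitIntegral (derivative (L n) * L j) := by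
      conv_lhs => rw [eq_sum_realShiftedLegendre hr]
      simp only [map_sum, map_smul, sum_mul, smul_mul_assoc, smul_eq_mul, a]
    rw [hexp, mul_sum]
    refine (abs_sum_le_sum_abs _ _).trans (sum_le_sum fun n _ => ?_)
    rw [abs_mul, mul_comm 2]
    exact mul_le_mul_of_nonneg_left
      (abs_unitIntegral_derivative_realShiftedLegendre_mul_le n j) (abs_nonneg _)
  have hS : S ^ 2 ≤ m ^ 2 * unitIntegral (r ^ 2) := by
    rw [unitIntegral_sq_eq_sum hr, ← sum_range_two_mul_add_one]
    refine sum_sq_le_sum_mul_sum_of_sq_le_mul _ (fun n _ => by positivity)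
      (fun n _ => by positivity) fun n _ => le_of_eq ?_
    simp only [a, sq_abs]
    ring
  calc unitIntegral (derivative r ^ 2)
      = ∑ j ∈ range m, (2 * j + 1) * unitIntegral (derivative r * L j) ^ 2 :=
        unitIntegral_sq_eq_sum (degree_derivative_le.trans_lt hr)
    _ ≤ ∑ j ∈ range m, (2 * j + 1) * (2 * S) ^ 2 := by
        refine sum_le_sum fun j _ => mul_le_mul_of_nonneg_left ?_ (by positivity)
        exact sq_le_sq' (abs_le.mp (hcoeff j)).1 (abs_le.mp (hcoeff j)).2
    _ = 4 * m ^ 2 * S ^ 2 := by rw [← sum_mul, sum_range_two_mul_add_one]; ring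
    _ ≤ 4 * m ^ 4 * unitIntegral (r ^ 2) := by
        nlinarith [hS, sq_nonneg (m : ℝ)]

end Polynomial

theorem mul_sqrt_mul_sqrt_le_of_le_mul {k : ℕ} (hk : 1 ≤ k) {A B : ℝ} (hB : 0 ≤ B)
    (h : A ≤ 4 * ((k : ℝ) + 2) ^ 4 * B) : 1 / 18 / (k : ℝ) ^ 2 * √A * √B ≤ B := by
  have hsqrtA : √A ≤ 2 * (k + 2) ^ 2 * √B := by
    calc √A ≤ √((2 * (k + 2) ^ 2) ^ 2 * B) := Real.sqrt_le_sqrt (by linarith)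
      _ = 2 * (k + 2) ^ 2 * √B := by
          rw [Real.sqrt_mul (by positivity), Real.sqrt_sq (by positivity)]
  have hk3 : ((k : ℝ) + 2) / (3 * k) ≤ 1 := by
    have : (1 : ℝ) ≤ k := by exact_mod_cast hk
    rw [div_le_one (by positivity)]
    linarith
  calc 1 / 18 / (k : ℝ) ^ 2 * √A * √B ≤ 1 / 18 / (k : ℝ) ^ 2 * (2 * (k + 2) ^ 2 * √B) * √B := by
        gcongr
    _ = (((k : ℝ) + 2) / (3 * k)) ^ 2 * (√B * √B) := by field_simp; ring
    _ ≤ B := by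
        rw [Real.mul_self_sqrt hB]
        exact mul_le_of_le_one_left hB (pow_le_one₀ (by positivity) hk3)

theorem stmt_1 : ∃ C : ℝ, 0 < C ∧ ∀ k : ℕ, 1 ≤ k → ∀ p : Polynomial ℝ,
    p.natDegree ≤ k → p ≠ 0 →
    ∃ q : Polynomial ℝ, q.natDegree ≤ k + 2 ∧ q.eval 0 = 0 ∧ q.eval 1 = 0 ∧
      0 < (∫ x in Set.Ioo (0:ℝ) 1, (Polynomial.derivative q).eval x ^ 2) ∧
      C / (k : ℝ) ^ 2 * Real.sqrt (∫ x in Set.Ioo (0:ℝ) 1, p.eval x ^ 2) *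
          Real.sqrt (∫ x in Set.Ioo (0:ℝ) 1, (Polynomial.derivative q).eval x ^ 2)
        ≤ ∫ x in Set.Ioo (0:ℝ) 1, p.eval x * q.eval x := by
  refine ⟨1 / 18, by norm_num, fun k hk p hp hp0 => ?_⟩
  obtain ⟨q, hq'', hq0, hq1, hqdeg⟩ := exists_derivative_derivative_eq_vanishing_at_zero_one (-p)
  rw [natDegree_neg] at hqdeg
  have hq' : derivative q ≠ 0 := fun h => hp0 (by simpa [h] using hq''.symm)
  have hpq : unitIntegral (p * q) = unitIntegral (derivative q ^ 2) := by
    have h := unitIntegral_derivative_mul (derivative q) q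
    rw [hq'', hq0, hq1, neg_mul, map_neg, ← sq] at h
    linarith
  have hq'deg : (derivative q).degree < (k + 2 : ℕ) := by
    have := natDegree_derivative_le q
    exact degree_le_natDegree.trans_lt (by exact_mod_cast (show _ < k + 2 by omega))
  have hmarkov := unitIntegral_derivative_sq_le hq'deg
  rw [hq'', neg_sq] at hmarkov
  simp_rw [← eval_pow, ← eval_mul, ← unitIntegral_eq_setIntegral_Ioo]
  refine ⟨q, by omega, hq0, hq1, unitIntegral_sq_pos hq', ?_⟩
  rw [hpq]
  exact mul_sqrt_mul_sqrt_le_of_le_mul hk (unitIntegral_sq_pos hq').le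
    (by exact_mod_cast hmarkov)
end

section
/- There exists a constant C > 0 such that for every integer k ≥ 1, every real polynomial p of degree at most k, and every real number M ≥ 0 the following holds: if ∫₀¹ p(x) q(x) dx ≤ M (∫₀¹ q'(x)² dx)^{1/2} for every real polynomial q with q(0) = q(1) = 0, then (∫₀¹ p(x)² dx)^{1/2} ≤ C k² M. (This is the endpoint case r = 0, s = 1 of the inverse inequality in negative Sobolev norms: ‖p‖_{L²(I)} ≲ k² ‖p‖_{(H¹₀(I))'}.) -/
open MeasureTheory Polynomial
open scoped Nat

noncomputable def J (h : ℝ[X]) : ℝ := ∫ x in Set.Ioo (0:ℝ) 1, h.eval x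

lemma integ (h : ℝ[X]) : IntegrableOn (fun x => h.eval x) (Set.Ioo (0:ℝ) 1) volume :=
  (h.continuous.integrableOn_Icc).mono_set Set.Ioo_subset_Icc_self

lemma J_add (h1 h2 : ℝ[X]) : J (h1 + h2) = J h1 + J h2 := by
  simp only [J, eval_add]
  exact integral_add (integ h1) (integ h2)

lemma J_Cmul (a : ℝ) (h : ℝ[X]) : J (C a * h) = a * J h := by
  simp only [J, eval_mul, eval_C]
  exact integral_const_mul a _

lemma J_zero : J 0 = 0 := by simp [J]

lemma J_sum {ι : Type*} (s : Finset ι) (F : ι → ℝ[X]) :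
    J (∑ i ∈ s, F i) = ∑ i ∈ s, J (F i) := by
  classical
  induction s using Finset.induction with
  | empty => simp [J_zero]
  | @insert a s ha ih => simp [Finset.sum_insert ha, J_add, ih]

lemma J_deriv (q : ℝ[X]) : J (derivative q) = q.eval 1 - q.eval 0 := by
  rw [J, ← integral_Ioc_eq_integral_Ioo, ← intervalIntegral.integral_of_le zero_le_one]
  exact intervalIntegral.integral_eq_sub_of_hasDerivAt (fun x _ => q.hasDerivAt x)
    ((derivative q).continuous.intervalIntegrable _ _)

noncomputable def ip (g h : ℝ[X]) : ℝ := J (g * h)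

lemma ip_comm (g h : ℝ[X]) : ip g h = ip h g := by rw [ip, ip, mul_comm]

lemma ip_eq_integral (g h : ℝ[X]) :
    ip g h = ∫ x in Set.Ioo (0:ℝ) 1, g.eval x * h.eval x := by
  simp [ip, J]

lemma ip_self_nonneg (h : ℝ[X]) : 0 ≤ ip h h := by
  rw [ip, J]
  apply setIntegral_nonneg measurableSet_Ioo
  intro x _
  simpa [eval_mul] using mul_self_nonneg (h.eval x)

lemma ip_sum_left {ι : Type*} (s : Finset ι) (F : ι → ℝ[X]) (h : ℝ[X]) :
    ip (∑ i ∈ s, F i) h = ∑ i ∈ s, ip (F i) h := by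
  rw [ip, Finset.sum_mul, J_sum]; rfl

lemma ip_Cmul_left (a : ℝ) (g h : ℝ[X]) : ip (C a * g) h = a * ip g h := by
  rw [ip, mul_assoc, J_Cmul]; rfl

lemma ip_zero_left (h : ℝ[X]) : ip 0 h = 0 := by rw [ip, zero_mul, J_zero]

lemma parts (u v : ℝ[X]) :
    ip (derivative u) v =
      u.eval 1 * v.eval 1 - u.eval 0 * v.eval 0 - ip u (derivative v) := by
  have h := J_deriv (u * v)
  rw [derivative_mul, J_add] at h
  simp only [eval_mul] at h
  rw [ip, ip]
  linarith

/-! ### Legendre-type polynomials -/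

noncomputable def fP (n : ℕ) : ℝ[X] := X ^ n * (1 - X) ^ n

noncomputable def LP (n : ℕ) : ℝ[X] := derivative^[n] (fP n)

lemma dvd_deriv (a : ℝ) (m : ℕ) (h : ℝ[X]) (hd : (X - C a) ^ (m + 1) ∣ h) :
    (X - C a) ^ m ∣ derivative h := by
  obtain ⟨r, rfl⟩ := hd
  rw [derivative_mul, derivative_pow, derivative_X_sub_C]
  exact ⟨C ((m:ℝ)+1) * r + (X - C a) * derivative r, by
    simp only [Nat.add_sub_cancel, mul_one]; push_cast; ring⟩

lemma dvd_iter_deriv (a : ℝ) (m i : ℕ) (h : ℝ[X]) (hd : (X - C a) ^ (m + i) ∣ h) :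
    (X - C a) ^ m ∣ derivative^[i] h := by
  induction i generalizing m with
  | zero => simpa using hd
  | succ i ih =>
    rw [Function.iterate_succ_apply']
    exact dvd_deriv a m _ (ih (m + 1) (by rwa [show m + 1 + i = m + (i+1) by ring]))

lemma fP_dvd0 (n : ℕ) : (X - C (0:ℝ)) ^ n ∣ fP n := by
  simpa [fP] using Dvd.intro _ rfl

lemma fP_dvd1 (n : ℕ) : (X - C (1:ℝ)) ^ n ∣ fP n := by
  have h : ((1 : ℝ[X]) - X) = -(X - C 1) := by simp only [map_one]; ring
  exact ⟨(-1)^n * X ^ n, by rw [fP, h, neg_pow]; ring⟩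

lemma boundary_eval (n i : ℕ) (hi : i < n) (a : ℝ) (ha : a = 0 ∨ a = 1) :
    (derivative^[i] (fP n)).eval a = 0 := by
  have hn : (X - C a) ^ n ∣ fP n := by
    rcases ha with rfl | rfl
    · exact fP_dvd0 n
    · exact fP_dvd1 n
  have hd : (X - C a) ^ 1 ∣ derivative^[i] (fP n) :=
    dvd_iter_deriv a 1 i _ (dvd_trans (pow_dvd_pow _ (by omega : 1 + i ≤ n)) hn)
  obtain ⟨r, hr⟩ := hd
  simp [hr]

lemma parts_iter (n : ℕ) (g : ℝ[X]) :
    ∀ j i, i + j = n →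
      ip (LP n) g = (-1:ℝ)^j * ip (derivative^[i] (fP n)) (derivative^[j] g) := by
  intro j
  induction j generalizing g with
  | zero => intro i hi; subst hi; simp [LP]
  | succ j ih =>
    intro i hi
    have h1 : ip (LP n) g = (-1:ℝ)^j * ip (derivative^[i+1] (fP n)) (derivative^[j] g) :=
      ih g (i+1) (by omega)
    rw [h1, Function.iterate_succ_apply', parts]
    rw [boundary_eval n i (by omega) 1 (Or.inr rfl), boundary_eval n i (by omega) 0 (Or.inl rfl)]
    rw [← Function.iterate_succ_apply' derivative j g]
    ring

lemma orth (n : ℕ) (g : ℝ[X]) (hg : g.natDegree < n) : ip (LP n) g = 0 := by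
  have := parts_iter n g n 0 (by omega)
  rw [this, iterate_derivative_eq_zero hg]
  simp [ip, J_zero]

/-! ### coefficients and values -/

lemma oneSubX_eq : ((1 : ℝ[X]) - X) = -(X - C 1) := by simp only [map_one]; ring

lemma natDegree_oneSubX : ((1:ℝ[X]) - X).natDegree = 1 := by
  rw [oneSubX_eq, natDegree_neg, natDegree_X_sub_C]

lemma oneSubX_ne : ((1:ℝ[X]) - X) ≠ 0 := by
  intro h
  have := natDegree_oneSubX
  rw [h] at this
  simp at this

lemma leadingCoeff_oneSubX : ((1:ℝ[X]) - X).leadingCoeff = -1 := by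
  rw [oneSubX_eq, leadingCoeff_neg, (monic_X_sub_C (1:ℝ)).leadingCoeff]

lemma natDegree_fP (n : ℕ) : (fP n).natDegree = 2 * n := by
  rw [fP, natDegree_mul (pow_ne_zero _ X_ne_zero) (pow_ne_zero _ oneSubX_ne),
    natDegree_pow, natDegree_pow, natDegree_X, natDegree_oneSubX]
  ring

lemma coeff_fP_top (n : ℕ) : (fP n).coeff (2 * n) = (-1:ℝ)^n := by
  have h : (fP n).coeff (2*n) = (fP n).leadingCoeff := by rw [leadingCoeff, natDegree_fP]
  rw [h, fP, leadingCoeff_mul, leadingCoeff_pow, leadingCoeff_pow, leadingCoeff_X,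
    leadingCoeff_oneSubX]
  simp

lemma coeff_fP_mid (n : ℕ) : (fP n).coeff n = 1 := by
  have h := coeff_X_pow_mul ((1 - X : ℝ[X])^n) n 0
  rw [zero_add] at h
  rw [fP, h]
  simp [coeff_zero_eq_eval_zero]

lemma iter2n_fP (n : ℕ) : derivative^[2*n] (fP n) = C ((-1:ℝ)^n * (2*n)!) := by
  have hdeg : (derivative^[2*n] (fP n)).natDegree ≤ 0 := by
    have := natDegree_iterate_derivative (fP n) (2*n)
    rw [natDegree_fP] at this
    omega
  rw [eq_C_of_natDegree_le_zero hdeg, coeff_iterate_derivative]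
  rw [zero_add, Nat.descFactorial_self, coeff_fP_top, nsmul_eq_mul]
  ring_nf

lemma LP_eval0 (n : ℕ) : (LP n).eval 0 = (n ! : ℝ) := by
  rw [← coeff_zero_eq_eval_zero, LP, coeff_iterate_derivative, zero_add,
    Nat.descFactorial_self, coeff_fP_mid, nsmul_eq_mul]
  simp

lemma coeff_LP_top (n : ℕ) : (LP n).coeff n = (-1:ℝ)^n * ((2*n)! / n !) := by
  rw [LP, coeff_iterate_derivative, show n + n = 2*n by ring, coeff_fP_top, nsmul_eq_mul]
  rw [Nat.descFactorial_eq_div (by omega : n ≤ 2*n), show 2*n - n = n by omega]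
  rw [Nat.cast_div (Nat.factorial_dvd_factorial (by omega)) (by positivity)]
  ring

lemma natDegree_LP (n : ℕ) : (LP n).natDegree = n := by
  have h1 : (LP n).natDegree ≤ n := by
    have := natDegree_iterate_derivative (fP n) n
    rw [natDegree_fP] at this
    rw [LP]
    omega
  have h2 : (LP n).coeff n ≠ 0 := by
    rw [coeff_LP_top]
    apply mul_ne_zero (pow_ne_zero _ (by norm_num))
    have : (0:ℝ) < ((2*n)! : ℝ) / (n ! : ℝ) := by positivity
    exact ne_of_gt this
  exact le_antisymm h1 (le_natDegree_of_ne_zero h2)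

lemma LP_ne_zero (n : ℕ) : LP n ≠ 0 := fun h => by
  have h2 := natDegree_LP n
  have := coeff_LP_top n
  rw [h, coeff_zero] at this
  have hpos : (0:ℝ) < ((2*n)! : ℝ) / (n ! : ℝ) := by positivity
  exact absurd this.symm (mul_ne_zero (pow_ne_zero _ (by norm_num)) (ne_of_gt hpos))

/-! ### symmetry -/

lemma fP_comp (n : ℕ) : (fP n).comp (1 - X) = fP n := by
  rw [fP, mul_comp, pow_comp, pow_comp, X_comp, sub_comp, one_comp, X_comp]
  rw [show (1:ℝ[X]) - (1 - X) = X by ring]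
  ring

lemma iter_deriv_comp (j : ℕ) (q : ℝ[X]) :
    derivative^[j] (q.comp (1 - X)) = (-1:ℝ[X])^j * ((derivative^[j] q).comp (1 - X)) := by
  induction j generalizing q with
  | zero => simp
  | succ j ih =>
    rw [Function.iterate_succ_apply', ih, derivative_mul, derivative_pow]
    rw [derivative_comp]
    have h1 : derivative ((1:ℝ[X]) - X) = -1 := by
      rw [derivative_sub, derivative_one, derivative_X]; ring
    rw [h1, Function.iterate_succ_apply' derivative j q]
    simp only [derivative_neg, derivative_one, neg_zero, mul_zero, zero_mul, zero_add]
    ring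

lemma LP_eval1 (n : ℕ) : (LP n).eval 1 = (-1:ℝ)^n * (n ! : ℝ) := by
  have h : LP n = (-1:ℝ[X])^n * ((LP n).comp (1 - X)) := by
    conv_lhs => rw [LP, ← fP_comp n]
    rw [iter_deriv_comp]
    rfl
  have := congrArg (eval (1:ℝ)) h
  rw [eval_mul, eval_comp] at this
  simpa [LP_eval0] using this

/-! ### beta integrals and norms -/

lemma J_neg (h : ℝ[X]) : J (-h) = - J h := by
  rw [show -h = C (-1:ℝ) * h by simp, J_Cmul]; ring

lemma J_sub (g h : ℝ[X]) : J (g - h) = J g - J h := by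
  rw [sub_eq_add_neg, J_add, J_neg]; ring

lemma J_Xpow (a : ℕ) : J (X ^ a) = 1 / ((a:ℝ)+1) := by
  have hD : derivative (C (1/((a:ℝ)+1)) * X^(a+1)) = X ^ a := by
    rw [derivative_mul, derivative_C, derivative_pow, derivative_X, Nat.add_sub_cancel]
    push_cast
    rw [zero_mul, zero_add, mul_one, ← mul_assoc, ← C_mul, one_div,
      inv_mul_cancel₀ (by positivity : (0:ℝ) < (a:ℝ)+1).ne', C_1, one_mul]
  rw [← hD, J_deriv]
  simp

lemma Bt_rec (a b : ℕ) :
    ((a:ℝ)+1) * J (X^a * (1-X)^(b+1)) = ((b:ℝ)+1) * J (X^(a+1) * (1-X)^b) := by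
  have h1 : derivative ((1:ℝ[X]) - X) = -1 := by
    rw [derivative_sub, derivative_one, derivative_X]; ring
  have hD : derivative (X^(a+1) * (1-X)^(b+1)) =
      C ((a:ℝ)+1) * (X^a * (1-X)^(b+1)) - C ((b:ℝ)+1) * (X^(a+1) * (1-X)^b) := by
    rw [derivative_mul, derivative_pow, derivative_pow, derivative_X, h1,
      Nat.add_sub_cancel, Nat.add_sub_cancel]
    push_cast
    ring
  have h2 := J_deriv (X^(a+1) * (1-X)^(b+1))
  rw [hD, J_sub, J_Cmul, J_Cmul] at h2
  simp only [eval_mul, eval_pow, eval_X, eval_sub, eval_one] at h2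
  rw [zero_pow (by omega), one_pow, sub_self, zero_pow (by omega)] at h2
  linarith

lemma Bt_val : ∀ b a : ℕ, J (X^a * (1-X)^b) = ((a ! : ℝ) * (b ! : ℝ)) / ((a+b+1)! : ℝ) := by
  intro b
  induction b with
  | zero =>
    intro a
    rw [pow_zero, mul_one, J_Xpow, Nat.factorial_zero]
    rw [show a + 0 + 1 = a + 1 by ring, Nat.factorial_succ]
    push_cast
    have h1 : (0:ℝ) < (a ! : ℝ) := by positivity
    field_simp
  | succ b ih =>
    intro a
    have hrec := Bt_rec a b
    have h := ih (a+1)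
    have ha : (0:ℝ) < (a:ℝ)+1 := by positivity
    have key : J (X^a * (1-X)^(b+1)) = (((b:ℝ)+1) / ((a:ℝ)+1)) * J (X^(a+1) * (1-X)^b) := by
      field_simp
      linarith
    rw [key, h]
    rw [show a + 1 + b + 1 = a + (b+1) + 1 by ring, Nat.factorial_succ (a), Nat.factorial_succ b]
    push_cast
    have h2 : (0:ℝ) < ((a + (b+1) + 1)! : ℝ) := by positivity
    have h3 : (0:ℝ) < (a ! : ℝ) := by positivity
    field_simp

lemma Nval (n : ℕ) : ip (LP n) (LP n) = ((n ! : ℝ))^2 / (2*(n:ℝ)+1) := by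
  have h := parts_iter n (LP n) n 0 (by omega)
  rw [Function.iterate_zero_apply] at h
  have h2 : derivative^[n] (LP n) = C ((-1:ℝ)^n * (2*n)!) := by
    rw [LP, ← Function.iterate_add_apply, show n + n = 2*n by ring, iter2n_fP]
  rw [h2] at h
  have h3 : ip (fP n) (C ((-1:ℝ)^n * (2*n)!)) = ((-1:ℝ)^n * ((2*n)! : ℝ)) * J (fP n) := by
    rw [ip, mul_comm (fP n), J_Cmul]
  rw [h3, fP, Bt_val] at h
  rw [h]
  have e1 : (-1:ℝ)^n * (-1:ℝ)^n = 1 := by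
    rw [← pow_add, ← two_mul, pow_mul]; norm_num
  have e2 : ((n + n + 1)! : ℝ) = (2*(n:ℝ)+1) * ((2*n)! : ℝ) := by
    rw [show n + n + 1 = (2*n) + 1 by ring, Nat.factorial_succ]
    push_cast
    ring
  rw [e2]
  have h4 : (0:ℝ) < ((2*n)! : ℝ) := by positivity
  have h5 : (0:ℝ) < 2*(n:ℝ)+1 := by positivity
  have key : (-1:ℝ)^n * ((-1:ℝ)^n * ((2*n)! : ℝ) * ((n !:ℝ) * (n !:ℝ) / ((2*(n:ℝ)+1) * ((2*n)!:ℝ)))) =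
      ((-1:ℝ)^n*(-1:ℝ)^n) * (((2*n)!:ℝ) * ((n !:ℝ) * (n !:ℝ)) / ((2*(n:ℝ)+1) * ((2*n)!:ℝ))) := by
    ring
  rw [key, e1, one_mul]
  field_simp

/-! ### cross terms -/

lemma ip_LP_LP (m j : ℕ) (h : m ≠ j) : ip (LP m) (LP j) = 0 := by
  rcases lt_or_gt_of_ne h with hlt | hgt
  · rw [ip_comm]
    exact orth j (LP m) (by rw [natDegree_LP]; omega)
  · exact orth m (LP j) (by rw [natDegree_LP]; omega)

noncomputable def dmj (m j : ℕ) : ℝ := ip (derivative (LP m)) (LP j)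

lemma dmj_eq_zero (m j : ℕ) (h : m ≤ j) : dmj m j = 0 := by
  rcases Nat.eq_zero_or_pos m with rfl | hm
  · have : derivative (LP 0) = 0 := by
      rw [LP, Function.iterate_zero_apply, fP, pow_zero, pow_zero, one_mul, derivative_one]
    rw [dmj, this, ip_zero_left]
  · rw [dmj, ip_comm]
    apply orth j
    have := natDegree_derivative_le (LP m)
    rw [natDegree_LP] at this
    omega

lemma dmj_eq (m j : ℕ) (h : j < m) :
    dmj m j = ((-1:ℝ)^(m+j) - 1) * ((m ! : ℝ) * (j ! : ℝ)) := by
  rw [dmj, parts]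
  have hz : ip (LP m) (derivative (LP j)) = 0 := by
    apply orth m
    have := natDegree_derivative_le (LP j)
    rw [natDegree_LP] at this
    omega
  rw [hz, LP_eval0, LP_eval0, LP_eval1, LP_eval1, pow_add]
  ring

lemma dmj_sq_le (m j : ℕ) : (dmj m j)^2 ≤ 4 * ((m ! : ℝ) * (j ! : ℝ))^2 := by
  rcases le_or_gt m j with h | h
  · rw [dmj_eq_zero m j h]
    have h4 : (0:ℝ) ≤ 4 * ((m ! : ℝ) * (j ! : ℝ))^2 := by positivity
    simpa using h4
  · rw [dmj_eq m j h]
    have hb : ((-1:ℝ)^(m+j) - 1)^2 ≤ 4 := by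
      rcases Nat.even_or_odd (m+j) with he | ho
      · rw [he.neg_one_pow]; norm_num
      · rw [ho.neg_one_pow]; norm_num
    calc (((-1:ℝ)^(m+j) - 1) * ((m ! : ℝ) * (j ! : ℝ)))^2
        = ((-1:ℝ)^(m+j) - 1)^2 * ((m ! : ℝ) * (j ! : ℝ))^2 := by ring
      _ ≤ 4 * ((m ! : ℝ) * (j ! : ℝ))^2 := by
          apply mul_le_mul_of_nonneg_right hb
          positivity

/-! ### representation in the LP basis -/

lemma exists_rep (K : ℕ) (g : ℝ[X]) (hg : g.natDegree ≤ K) :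
    ∃ c : ℕ → ℝ, g = ∑ m ∈ Finset.range (K+1), C (c m) * LP m := by
  suffices H : ∀ d : ℕ, ∀ g : ℝ[X], g.natDegree < d → g.natDegree ≤ K →
      ∃ c : ℕ → ℝ, g = ∑ m ∈ Finset.range (K+1), C (c m) * LP m from
    H (g.natDegree + 1) g (Nat.lt_succ_self _) hg
  intro d
  induction d with
  | zero => intro g hgd _; omega
  | succ d ih =>
    intro g hgd hgK
    by_cases h0 : g = 0
    · exact ⟨0, by simp [h0]⟩
    set dg := g.natDegree with hdg
    have hdgK : dg < K + 1 := by omega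
    set a := g.leadingCoeff / (LP dg).leadingCoeff with ha
    set g' := g - C a * LP dg with hg'
    have hlc : (LP dg).leadingCoeff ≠ 0 := leadingCoeff_ne_zero.mpr (LP_ne_zero dg)
    have hsingle : ∀ b : ℝ, (∑ m ∈ Finset.range (K+1),
        C (if m = dg then b else 0) * LP m) = C b * LP dg := by
      intro b
      rw [Finset.sum_eq_single dg]
      · simp
      · intro m _ hm; simp [hm]
      · intro hmem; exact absurd (Finset.mem_range.mpr hdgK) hmem
    have hcoeff : g'.coeff dg = 0 := by
      rw [hg', coeff_sub, coeff_C_mul]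
      have h1 : (LP dg).coeff dg = (LP dg).leadingCoeff := by
        rw [leadingCoeff, natDegree_LP]
      have h2 : g.coeff dg = g.leadingCoeff := rfl
      rw [h1, h2, ha, div_mul_cancel₀ _ hlc, sub_self]
    have hg'le : g'.natDegree ≤ dg := by
      refine (natDegree_sub_le _ _).trans (max_le le_rfl ?_)
      exact (natDegree_C_mul_le _ _).trans (le_of_eq (natDegree_LP dg))
    by_cases h0' : g' = 0
    · refine ⟨fun m => if m = dg then a else 0, ?_⟩
      rw [hsingle a]
      have : g = C a * LP dg := by
        have := sub_eq_zero.mp h0'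
        linear_combination this
      exact this
    · have hg'lt : g'.natDegree < dg := by
        rcases lt_or_eq_of_le hg'le with h | h
        · exact h
        · exfalso
          apply h0'
          have : g'.leadingCoeff = 0 := by rw [leadingCoeff, h, hcoeff]
          exact leadingCoeff_eq_zero.mp this
      obtain ⟨c', hc'⟩ := ih g' (by omega) (by omega)
      refine ⟨fun m => c' m + if m = dg then a else 0, ?_⟩
      have hsplit : (∑ m ∈ Finset.range (K+1),
          C (c' m + if m = dg then a else 0) * LP m) =
          (∑ m ∈ Finset.range (K+1), C (c' m) * LP m) +
          (∑ m ∈ Finset.range (K+1), C (if m = dg then a else 0) * LP m) := by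
        rw [← Finset.sum_add_distrib]
        congr 1
        funext m
        rw [map_add, add_mul]
      rw [hsplit, hsingle a, ← hc']
      rw [hg']
      ring

/-! ### Markov inequality in L² -/

lemma sum_odds (K : ℕ) : ∑ m ∈ Finset.range (K+1), (2*(m:ℝ)+1) = ((K:ℝ)+1)^2 := by
  induction K with
  | zero => simp
  | succ K ih => rw [Finset.sum_range_succ, ih]; push_cast; ring

lemma rep_ip (K : ℕ) (c : ℕ → ℝ) (j : ℕ) (hj : j < K+1) :
    ip (∑ m ∈ Finset.range (K+1), C (c m) * LP m) (LP j) = c j * ip (LP j) (LP j) := by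
  rw [ip_sum_left, Finset.sum_eq_single j]
  · rw [ip_Cmul_left]
  · intro m _ hm; rw [ip_Cmul_left, ip_LP_LP m j hm, mul_zero]
  · intro h; exact absurd (Finset.mem_range.mpr hj) h

lemma rep_self (K : ℕ) (c : ℕ → ℝ) (g : ℝ[X])
    (hg : g = ∑ m ∈ Finset.range (K+1), C (c m) * LP m) :
    ip g g = ∑ m ∈ Finset.range (K+1), (c m)^2 * ip (LP m) (LP m) := by
  rw [hg, ip_sum_left]
  refine Finset.sum_congr rfl fun m hm => ?_
  rw [ip_Cmul_left, ip_comm (LP m), ← hg]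
  have : ip g (LP m) = c m * ip (LP m) (LP m) := by
    rw [hg]; exact rep_ip K c m (Finset.mem_range.mp hm)
  rw [this]
  ring

lemma markov (K : ℕ) (p : ℝ[X]) (hp : p.natDegree ≤ K) :
    ip (derivative p) (derivative p) ≤ 4 * ((K:ℝ)+1)^4 * ip p p := by
  classical
  obtain ⟨c, hc⟩ := exists_rep K p hp
  obtain ⟨e, he⟩ := exists_rep K (derivative p) ((natDegree_derivative_le p).trans (by omega))
  have hNpos : ∀ m : ℕ, 0 < ip (LP m) (LP m) := fun m => by rw [Nval]; positivity
  have hipp : ip p p = ∑ m ∈ Finset.range (K+1), (c m)^2 * ip (LP m) (LP m) :=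
    rep_self K c p hc
  have higg : ip (derivative p) (derivative p)
      = ∑ j ∈ Finset.range (K+1), (e j)^2 * ip (LP j) (LP j) := rep_self K e _ he
  have hipp_nonneg : 0 ≤ ip p p := ip_self_nonneg p
  have hgj : ∀ j, j < K + 1 → ip (derivative p) (LP j) = e j * ip (LP j) (LP j) := by
    intro j hj
    calc ip (derivative p) (LP j)
        = ip (∑ m ∈ Finset.range (K+1), C (e m) * LP m) (LP j) := by rw [← he]
      _ = e j * ip (LP j) (LP j) := rep_ip K e j hj
  have hgj' : ∀ j, ip (derivative p) (LP j) = ∑ m ∈ Finset.range (K+1), c m * dmj m j := by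
    intro j
    have hdp : derivative p = ∑ m ∈ Finset.range (K+1), C (c m) * derivative (LP m) := by
      rw [hc, derivative_sum]
      exact Finset.sum_congr rfl fun m _ => derivative_C_mul _ _
    rw [hdp, ip_sum_left]
    exact Finset.sum_congr rfl fun m _ => ip_Cmul_left _ _ _
  have inner_bound : ∀ j : ℕ, (∑ m ∈ Finset.range (K+1), (dmj m j)^2 / ip (LP m) (LP m))
      ≤ 4 * ((j ! : ℝ))^2 * ((K:ℝ)+1)^2 := by
    intro j
    have step : ∀ m ∈ Finset.range (K+1),
        (dmj m j)^2 / ip (LP m) (LP m) ≤ 4 * ((j ! : ℝ))^2 * (2*(m:ℝ)+1) := by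
      intro m _
      rw [Nval]
      have hm0 : (0:ℝ) < ((m ! : ℝ))^2 / (2*(m:ℝ)+1) := by positivity
      rw [div_le_iff₀ hm0]
      calc (dmj m j)^2 ≤ 4 * ((m ! : ℝ) * (j ! : ℝ))^2 := dmj_sq_le m j
        _ = 4 * ((j ! : ℝ))^2 * (2*(m:ℝ)+1) * (((m ! : ℝ))^2/(2*(m:ℝ)+1)) := by
            field_simp
    calc (∑ m ∈ Finset.range (K+1), (dmj m j)^2 / ip (LP m) (LP m))
        ≤ ∑ m ∈ Finset.range (K+1), 4 * ((j ! : ℝ))^2 * (2*(m:ℝ)+1) :=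
          Finset.sum_le_sum step
      _ = 4 * ((j ! : ℝ))^2 * ∑ m ∈ Finset.range (K+1), (2*(m:ℝ)+1) := by
          rw [Finset.mul_sum]
      _ = 4 * ((j ! : ℝ))^2 * ((K:ℝ)+1)^2 := by rw [sum_odds]
  have CS : ∀ j : ℕ, (ip (derivative p) (LP j))^2
      ≤ ip p p * (4 * ((j ! : ℝ))^2 * ((K:ℝ)+1)^2) := by
    intro j
    have h1 : ∀ m : ℕ, (c m * Real.sqrt (ip (LP m) (LP m))) *
        (dmj m j / Real.sqrt (ip (LP m) (LP m))) = c m * dmj m j := by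
      intro m
      have hs : Real.sqrt (ip (LP m) (LP m)) ≠ 0 := (Real.sqrt_pos.mpr (hNpos m)).ne'
      field_simp
    have h2 : ∀ m : ℕ, (c m * Real.sqrt (ip (LP m) (LP m)))^2
        = (c m)^2 * ip (LP m) (LP m) := by
      intro m; rw [mul_pow, Real.sq_sqrt (hNpos m).le]
    have h3 : ∀ m : ℕ, (dmj m j / Real.sqrt (ip (LP m) (LP m)))^2
        = (dmj m j)^2 / ip (LP m) (LP m) := by
      intro m; rw [div_pow, Real.sq_sqrt (hNpos m).le]
    have hcs := Finset.sum_mul_sq_le_sq_mul_sq (Finset.range (K+1))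
      (fun m => c m * Real.sqrt (ip (LP m) (LP m)))
      (fun m => dmj m j / Real.sqrt (ip (LP m) (LP m)))
    rw [hgj' j,
      show (∑ m ∈ Finset.range (K+1), c m * dmj m j)
        = ∑ m ∈ Finset.range (K+1), (c m * Real.sqrt (ip (LP m) (LP m))) *
            (dmj m j / Real.sqrt (ip (LP m) (LP m))) from
        Finset.sum_congr rfl fun m _ => (h1 m).symm]
    refine le_trans hcs ?_
    rw [show (∑ m ∈ Finset.range (K+1), (c m * Real.sqrt (ip (LP m) (LP m)))^2)
        = ip p p from by rw [hipp]; exact Finset.sum_congr rfl fun m _ => h2 m,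
      show (∑ m ∈ Finset.range (K+1), (dmj m j / Real.sqrt (ip (LP m) (LP m)))^2)
        = ∑ m ∈ Finset.range (K+1), (dmj m j)^2 / ip (LP m) (LP m) from
        Finset.sum_congr rfl fun m _ => h3 m]
    exact mul_le_mul_of_nonneg_left (inner_bound j) hipp_nonneg
  rw [higg]
  have per_j : ∀ j ∈ Finset.range (K+1), (e j)^2 * ip (LP j) (LP j)
      ≤ (ip p p * (4 * ((j ! : ℝ))^2 * ((K:ℝ)+1)^2)) / ip (LP j) (LP j) := by
    intro j hj
    have hNj := hNpos j
    have heq : (e j)^2 * ip (LP j) (LP j)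
        = (ip (derivative p) (LP j))^2 / ip (LP j) (LP j) := by
      rw [hgj j (Finset.mem_range.mp hj)]
      field_simp
    rw [heq]
    gcongr
    exact CS j
  calc (∑ j ∈ Finset.range (K+1), (e j)^2 * ip (LP j) (LP j))
      ≤ ∑ j ∈ Finset.range (K+1),
          (ip p p * (4 * ((j ! : ℝ))^2 * ((K:ℝ)+1)^2)) / ip (LP j) (LP j) :=
        Finset.sum_le_sum per_j
    _ = ip p p * 4 * ((K:ℝ)+1)^2 *
          ∑ j ∈ Finset.range (K+1), ((j ! : ℝ))^2 / ip (LP j) (LP j) := by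
        rw [Finset.mul_sum]
        exact Finset.sum_congr rfl fun j _ => by ring
    _ = ip p p * 4 * ((K:ℝ)+1)^2 * ∑ j ∈ Finset.range (K+1), (2*(j:ℝ)+1) := by
        congr 1
        refine Finset.sum_congr rfl fun j _ => ?_
        rw [Nval]
        have h1 : (0:ℝ) < ((j ! : ℝ)) := by positivity
        have h2 : (0:ℝ) < 2*(j:ℝ)+1 := by positivity
        field_simp
    _ = ip p p * 4 * ((K:ℝ)+1)^2 * ((K:ℝ)+1)^2 := by rw [sum_odds]
    _ = 4 * ((K:ℝ)+1)^4 * ip p p := by ring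

/-! ### antiderivative -/

noncomputable def antider (r : ℝ[X]) : ℝ[X] :=
  r.sum fun i a => C (a/((i:ℝ)+1)) * X^(i+1)

lemma deriv_antider (r : ℝ[X]) : derivative (antider r) = r := by
  conv_rhs => rw [← sum_C_mul_X_pow_eq r]
  rw [antider, Polynomial.sum, derivative_sum, Polynomial.sum]
  refine Finset.sum_congr rfl fun i _ => ?_
  rw [derivative_C_mul, derivative_X_pow, Nat.add_sub_cancel, ← mul_assoc, ← C_mul]
  congr 2
  push_cast
  rw [div_mul_cancel₀]
  positivity

lemma eval0_antider (r : ℝ[X]) : (antider r).eval 0 = 0 := by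
  rw [antider, Polynomial.sum, eval_finset_sum]
  refine Finset.sum_eq_zero fun i _ => ?_
  simp

lemma natDegree_antider_le (r : ℝ[X]) : (antider r).natDegree ≤ r.natDegree + 1 := by
  rw [antider, Polynomial.sum]
  refine natDegree_sum_le_of_forall_le _ _ fun i hi => ?_
  refine (natDegree_C_mul_le _ _).trans ?_
  rw [natDegree_X_pow]
  exact Nat.add_le_add_right (le_natDegree_of_mem_supp i hi) 1

lemma ip_neg_left (g h : ℝ[X]) : ip (-g) h = - ip g h := by
  rw [ip, ip, neg_mul, J_neg]

lemma ip_neg_neg (g : ℝ[X]) : ip (-g) (-g) = ip g g := by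
  rw [ip, ip, neg_mul_neg]

theorem stmt_2 : ∃ C : ℝ, 0 < C ∧ ∀ k : ℕ, 1 ≤ k → ∀ p : Polynomial ℝ,
    p.natDegree ≤ k → ∀ M : ℝ, 0 ≤ M →
    (∀ q : Polynomial ℝ, q.eval 0 = 0 → q.eval 1 = 0 →
      (∫ x in Set.Ioo (0:ℝ) 1, p.eval x * q.eval x) ≤
        M * Real.sqrt (∫ x in Set.Ioo (0:ℝ) 1, (Polynomial.derivative q).eval x ^ 2)) →
    Real.sqrt (∫ x in Set.Ioo (0:ℝ) 1, p.eval x ^ 2) ≤ C * (k : ℝ) ^ 2 * M := by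
  refine ⟨18, by norm_num, ?_⟩
  intro k hk p hp M hM hyp
  set q1 := antider p with hq1
  set q2 := antider q1 with hq2
  set b := q2.eval 1 with hb
  set q := C b * X - q2 with hq
  set r := derivative q with hr
  have hq0 : q.eval 0 = 0 := by
    rw [hq, eval_sub, eval_mul, eval_C, eval_X, eval0_antider]
    ring
  have hq1' : q.eval 1 = 0 := by
    rw [hq, eval_sub, eval_mul, eval_C, eval_X, ← hb]
    ring
  have hre : r = C b - q1 := by
    rw [hr, hq, derivative_sub, derivative_C_mul_X, hq2, deriv_antider]
  have hdr : derivative r = -p := by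
    rw [hre, derivative_sub, derivative_C, hq1, deriv_antider]
    ring
  have hrdeg : r.natDegree ≤ k + 1 := by
    rw [hre]
    refine (natDegree_sub_le _ _).trans (max_le ?_ ?_)
    · simp
    · exact (natDegree_antider_le p).trans (by omega)
  -- the key identity : ∫ p q = ip r r
  have hiden : ip p q = ip r r := by
    have h1 : ip (derivative r) q = - ip p q := by
      rw [hdr, ip_neg_left]
    have h2 := parts r q
    rw [hq0, hq1', mul_zero, mul_zero, sub_zero, zero_sub, ← hr] at h2
    rw [h2] at h1
    linarith
  set S := ip r r with hS
  have hSnn : 0 ≤ S := ip_self_nonneg r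
  have hSM : S ≤ M * Real.sqrt S := by
    have := hyp q hq0 hq1'
    rw [← ip_eq_integral, hiden] at this
    have hint : (∫ x in Set.Ioo (0:ℝ) 1, (derivative q).eval x ^ 2) = S := by
      rw [hS, ip, J]
      refine setIntegral_congr_fun measurableSet_Ioo fun x _ => ?_
      rw [← hr, eval_mul]
      ring
    rwa [hint] at this
  have hsqrtS : Real.sqrt S ≤ M := by
    rcases eq_or_lt_of_le hSnn with h0 | h0
    · rw [← h0, Real.sqrt_zero]; exact hM
    · have hs : 0 < Real.sqrt S := Real.sqrt_pos.mpr h0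
      have : Real.sqrt S * Real.sqrt S ≤ M * Real.sqrt S := by
        rw [Real.mul_self_sqrt hSnn]; exact hSM
      exact le_of_mul_le_mul_right this hs
  have hSM2 : S ≤ M^2 := by

    calc S = Real.sqrt S * Real.sqrt S := (Real.mul_self_sqrt hSnn).symm
      _ ≤ M * M := mul_le_mul hsqrtS hsqrtS (Real.sqrt_nonneg S) hM
      _ = M^2 := by ring
  -- Markov inequality
  have hmark := markov (k+1) r hrdeg
  have hmark' : ip p p ≤ 4 * ((k:ℝ)+2)^4 * S := by
    have h1 : ip (derivative r) (derivative r) = ip p p := by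
      rw [hdr, ip_neg_neg]
    rw [h1] at hmark
    have : ((k+1:ℕ):ℝ) + 1 = (k:ℝ) + 2 := by push_cast; ring
    rw [this] at hmark
    exact hmark
  have hfin : ip p p ≤ 4 * ((k:ℝ)+2)^4 * M^2 := by
    calc ip p p ≤ 4 * ((k:ℝ)+2)^4 * S := hmark'
      _ ≤ 4 * ((k:ℝ)+2)^4 * M^2 := by
          apply mul_le_mul_of_nonneg_left hSM2
          positivity
  have hgoal : (∫ x in Set.Ioo (0:ℝ) 1, p.eval x ^ 2) = ip p p := by
    rw [ip, J]
    refine setIntegral_congr_fun measurableSet_Ioo fun x _ => ?_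
    rw [eval_mul]
    ring
  rw [hgoal]
  have h2 : Real.sqrt (ip p p) ≤ Real.sqrt (4 * ((k:ℝ)+2)^4 * M^2) :=
    Real.sqrt_le_sqrt hfin
  rw [show 4 * ((k:ℝ)+2)^4 * M^2 = (2*((k:ℝ)+2)^2*M)^2 by ring,
    Real.sqrt_sq (by positivity)] at h2
  refine h2.trans ?_
  have hk1 : (1:ℝ) ≤ (k:ℝ) := by exact_mod_cast hk
  nlinarith [sq_nonneg ((k:ℝ) - 1), hM, mul_le_mul_of_nonneg_right
    (by nlinarith : 2*((k:ℝ)+2)^2 ≤ 18*(k:ℝ)^2) hM]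
end

section
/- Let H be a real inner product space, let n ≥ 1, and let φ₁, …, φₙ ∈ H be linearly independent. Let S be the n × n Gram matrix with entries S_{ij} = ⟪φ_j, φ_i⟫. Then S is invertible, and for all continuous linear functionals F, G : H → ℝ, writing F⃗ = (F(φ₁), …, F(φₙ)) and G⃗ = (G(φ₁), …, G(φₙ)), one has F⃗ᵀ S⁻¹ G⃗ ≤ ‖F‖ ‖G‖, where ‖F‖ and ‖G‖ are the operator norms of F and G. (Continuity of the algebraically realized stabilization form s_K(F,G) = F⃗ᵀ S⁻¹ G⃗ with continuity constant M(k) = 1.) -/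
/-!
Put `c = S⁻¹ G⃗` and `u = ∑ⱼ cⱼ φⱼ`. Then `S c = G⃗` says `⟪u, φᵢ⟫ = G φᵢ` for all `i`, so `u` represents
`G` on the span of the `φᵢ`; hence `‖u‖² = G u ≤ ‖G‖ ‖u‖`, i.e. `‖u‖ ≤ ‖G‖`, and
`F⃗ᵀ S⁻¹ G⃗ = F u ≤ ‖F‖ ‖u‖ ≤ ‖F‖ ‖G‖`.
-/

open Matrix

section

variable {H ι : Type*} [NormedAddCommGroup H] [InnerProductSpace ℝ H] [Fintype ι]

omit [Fintype ι] in
lemma of_inner_swap_eq_gram (φ : ι → H) :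
    (Matrix.of fun i j => (inner ℝ (φ j) (φ i) : ℝ)) = gram ℝ φ :=
  Matrix.ext fun _ _ => real_inner_comm _ _

lemma dotProduct_apply_eq_apply_sum_smul (F : H →L[ℝ] ℝ) (φ : ι → H) (c : ι → ℝ) :
    (fun i => F (φ i)) ⬝ᵥ c = F (∑ j, c j • φ j) := by
  simp only [dotProduct, map_sum, map_smul, smul_eq_mul, mul_comm]

lemma norm_sum_smul_le_opNorm (G : H →L[ℝ] ℝ) (φ : ι → H) {c : ι → ℝ}
    (hc : gram ℝ φ *ᵥ c = fun i => G (φ i)) : ‖∑ j, c j • φ j‖ ≤ ‖G‖ := by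
  have hsq : ‖∑ j, c j • φ j‖ * ‖∑ j, c j • φ j‖ = G (∑ j, c j • φ j) := by
    have hquad := star_dotProduct_gram_mulVec (𝕜 := ℝ) φ c c
    rw [star_trivial] at hquad
    rw [← real_inner_self_eq_norm_mul_norm, ← hquad, hc, dotProduct_comm,
      dotProduct_apply_eq_apply_sum_smul]
  set u := ∑ j, c j • φ j
  have hle : ‖u‖ * ‖u‖ ≤ ‖G‖ * ‖u‖ := hsq ▸ (le_abs_self _).trans (G.le_opNorm u)
  rcases (norm_nonneg u).eq_or_lt with hu | hu
  · exact hu ▸ norm_nonneg G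
  · exact le_of_mul_le_mul_right hle hu

lemma dotProduct_gram_inv_mulVec_le [DecidableEq ι] {φ : ι → H} (hφ : LinearIndependent ℝ φ)
    (F G : H →L[ℝ] ℝ) :
    (fun i => F (φ i)) ⬝ᵥ (gram ℝ φ)⁻¹ *ᵥ (fun i => G (φ i)) ≤ ‖F‖ * ‖G‖ := by
  set c := (gram ℝ φ)⁻¹ *ᵥ (fun i => G (φ i))
  have hc : gram ℝ φ *ᵥ c = fun i => G (φ i) := by
    rw [mulVec_mulVec, mul_nonsing_inv _
      ((isUnit_iff_isUnit_det _).mp (posDef_gram_of_linearIndependent hφ).isUnit),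
      one_mulVec]
  calc (fun i => F (φ i)) ⬝ᵥ c = F (∑ j, c j • φ j) := dotProduct_apply_eq_apply_sum_smul F φ c
    _ ≤ ‖F‖ * ‖∑ j, c j • φ j‖ := (le_abs_self _).trans (F.le_opNorm _)
    _ ≤ ‖F‖ * ‖G‖ := mul_le_mul_of_nonneg_left (norm_sum_smul_le_opNorm G φ hc) (norm_nonneg F)

end

theorem stmt_11_general (H : Type*) [NormedAddCommGroup H] [InnerProductSpace ℝ H]
    (n : ℕ) (φ : Fin n → H) (hφ : LinearIndependent ℝ φ) :
    IsUnit (Matrix.of fun i j : Fin n => (inner ℝ (φ j) (φ i) : ℝ)) ∧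
    ∀ F G : H →L[ℝ] ℝ,
      dotProduct (fun i => F (φ i))
        (Matrix.mulVec (Matrix.of fun i j : Fin n => (inner ℝ (φ j) (φ i) : ℝ))⁻¹
          (fun i => G (φ i))) ≤ ‖F‖ * ‖G‖ := by
  rw [of_inner_swap_eq_gram]
  exact ⟨(posDef_gram_of_linearIndependent hφ).isUnit, dotProduct_gram_inv_mulVec_le hφ⟩

theorem stmt_11 (H : Type*) [NormedAddCommGroup H] [InnerProductSpace ℝ H]
    (n : ℕ) (hn : 1 ≤ n) (φ : Fin n → H) (hφ : LinearIndependent ℝ φ) :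
    IsUnit (Matrix.of fun i j : Fin n => (inner ℝ (φ j) (φ i) : ℝ)) ∧
    ∀ F G : H →L[ℝ] ℝ,
      dotProduct (fun i => F (φ i))
        (Matrix.mulVec (Matrix.of fun i j : Fin n => (inner ℝ (φ j) (φ i) : ℝ))⁻¹
          (fun i => G (φ i))) ≤ ‖F‖ * ‖G‖ :=
  stmt_11_general H n φ hφ
end
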